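/- arXiv:1608.05095 — 3 statements merged into one kernel-verified Lean document; each statement's English description precedes it below -/
import Mathlib

section
/- For the Poisson(z) random variable truncated at k (i.e., conditioned on being ≥ k), with φ_r(z) := z·P(Poi(z)=r−1)/P(Poi(z)≥r) (and φ_{-1}=φ_0:=0), one has Var(Z) = E[Z]·(1 − φ_k(z) + φ_{k−1}(z)). -/
open Real Filter Set

/-- `truncExpSum k z = Σ_{j≥k} z^j/j!`. -/
noncomputable def truncExpSum (k : ℕ) (z : ℝ) : ℝ :=
  ∑' j : ℕ, if k ≤ j then z ^ j / (Nat.factorial j : ℝ) else 0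

/-- `poisTail k z = P(Poi(z) ≥ k) = e^{-z} Σ_{j≥k} z^j/j!`. -/
noncomputable def poisTail (k : ℕ) (z : ℝ) : ℝ := Real.exp (-z) * truncExpSum k z

/-- Mean of Poisson(z) conditioned on being ≥ k: `ψ_k(z) = z f_{k-1}(z)/f_k(z)`. -/
noncomputable def truncMean (k : ℕ) (z : ℝ) : ℝ :=
  z * truncExpSum (k - 1) z / truncExpSum k z

/-- Second moment of the truncated Poisson. -/
noncomputable def truncSecondMoment (k : ℕ) (z : ℝ) : ℝ :=
  (∑' j : ℕ, if k ≤ j then (j : ℝ) ^ 2 * z ^ j / (Nat.factorial j : ℝ) else 0)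
    / truncExpSum k z

/-- Variance of the truncated Poisson. -/
noncomputable def truncVar (k : ℕ) (z : ℝ) : ℝ :=
  truncSecondMoment k z - (truncMean k z) ^ 2

/-- `φ_r(z) = z·P(Poi(z)=r−1)/P(Poi(z)≥r)` for `r ≥ 1`, with `φ_0 := 0`. -/
noncomputable def phiP (r : ℕ) (z : ℝ) : ℝ :=
  if r = 0 then 0
  else z * (Real.exp (-z) * z ^ (r - 1) / (Nat.factorial (r - 1) : ℝ)) / poisTail r z

/-- `H(z_i,z_o) = (1 − φ_{k_1}(z_i))(1 − φ_{k_2}(z_o)) − φ_{k_1−1}(z_i)φ_{k_2−1}(z_o)`. -/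
noncomputable def Hfun (k1 k2 : ℕ) (zi zo : ℝ) : ℝ :=
  (1 - phiP k1 zi) * (1 - phiP k2 zo) - phiP (k1 - 1) zi * phiP (k2 - 1) zo

/-- `Ψ(z_i,z_o) = max{ z_i/(p_{k_1}(z_i)p_{k_2−1}(z_o)), z_o/(p_{k_2}(z_o)p_{k_1−1}(z_i)) }`. -/
noncomputable def Psi (k1 k2 : ℕ) (zi zo : ℝ) : ℝ :=
  max (zi / (poisTail k1 zi * poisTail (k2 - 1) zo))
      (zo / (poisTail k2 zo * poisTail (k1 - 1) zi))

/-!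
Write `f_k = Σ_{j ≥ k} z^j/j!`. The shift `j · z^j/j! = z · z^{j-1}/(j-1)!` turns the first and
second moments of the truncated series into `z f_{k-1}` and `z (z f_{k-2} + f_{k-1})`, and
`f_{r-1} - f_r = z^{r-1}/(r-1)!` gives `φ_r = z (f_{r-1} - f_r)/f_r`. What remains is an identity
of rational functions in `f_k, f_{k-1}, f_{k-2}`.
-/

open Nat

lemma hasSum_truncExpSum (k : ℕ) (z : ℝ) :
    HasSum (fun j : ℕ => if k ≤ j then z ^ j / (j ! : ℝ) else 0) (truncExpSum k z) := by
  refine Summable.hasSum ?_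
  refine ((Real.summable_pow_div_factorial z).indicator {j | k ≤ j}).congr fun j => ?_
  simp [Set.indicator_apply]

lemma truncExpSum_sub_succ (k : ℕ) (z : ℝ) :
    truncExpSum k z - truncExpSum (k + 1) z = z ^ k / (k ! : ℝ) := by
  have hdiff : (fun j : ℕ => (if k ≤ j then z ^ j / (j ! : ℝ) else 0) -
      if k + 1 ≤ j then z ^ j / (j ! : ℝ) else 0) =
      fun j => if j = k then z ^ k / (k ! : ℝ) else 0 := by
    funext j
    rcases lt_trichotomy j k with h | rfl | h
    · simp [h.not_ge, h.ne, show ¬ k + 1 ≤ j by omega]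
    · simp
    · simp [h.le, h.ne', show k + 1 ≤ j by omega]
  have h := (hasSum_truncExpSum k z).sub (hasSum_truncExpSum (k + 1) z)
  rw [hdiff] at h
  exact h.unique (hasSum_ite_eq k _)

lemma truncExpSum_pos (k : ℕ) {z : ℝ} (hz : 0 < z) : 0 < truncExpSum k z :=
  (hasSum_truncExpSum k z).summable.tsum_pos (fun j => by split_ifs <;> positivity) k
    (by simp only [le_refl, if_true]; positivity)

lemma HasSum.ite_natCast_mul_pow_div_factorial {m : ℕ} {z s : ℝ} (c : ℕ → ℝ)
    (h : HasSum (fun i : ℕ => if m - 1 ≤ i then c (i + 1) * z ^ i / (i ! : ℝ) else 0) s) :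
    HasSum (fun j : ℕ => if m ≤ j then (j : ℝ) * c j * z ^ j / (j ! : ℝ) else 0) (z * s) := by
  have hshift : ∀ i : ℕ,
      (if m ≤ i + 1 then ((i + 1 : ℕ) : ℝ) * c (i + 1) * z ^ (i + 1) / ((i + 1)! : ℝ) else 0) =
        z * (if m - 1 ≤ i then c (i + 1) * z ^ i / (i ! : ℝ) else 0) := by
    intro i
    by_cases hi : m ≤ i + 1
    · rw [if_pos hi, if_pos (by omega), factorial_succ, pow_succ]
      push_cast
      field_simp
    · rw [if_neg hi, if_neg (by omega), mul_zero]
  rw [← hasSum_nat_add_iff' 1, Finset.sum_range_one]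
  simpa only [hshift, CharP.cast_eq_zero, zero_mul, zero_div, ite_self, sub_zero]
    using h.mul_left z

lemma hasSum_ite_natCast_mul_pow_div_factorial (m : ℕ) (z : ℝ) :
    HasSum (fun j : ℕ => if m ≤ j then (j : ℝ) * z ^ j / (j ! : ℝ) else 0)
      (z * truncExpSum (m - 1) z) := by
  have h : HasSum (fun i : ℕ => if m - 1 ≤ i then (1 : ℝ) * z ^ i / (i ! : ℝ) else 0)
      (truncExpSum (m - 1) z) := by
    simpa only [one_mul] using hasSum_truncExpSum (m - 1) z
  simpa only [mul_one] using h.ite_natCast_mul_pow_div_factorial (fun _ => 1)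

lemma hasSum_ite_natCast_sq_mul_pow_div_factorial (k : ℕ) (z : ℝ) :
    HasSum (fun j : ℕ => if k ≤ j then (j : ℝ) ^ 2 * z ^ j / (j ! : ℝ) else 0)
      (z * (z * truncExpSum (k - 1 - 1) z + truncExpSum (k - 1) z)) := by
  have hsplit : (fun i : ℕ => (if k - 1 ≤ i then (i : ℝ) * z ^ i / (i ! : ℝ) else 0) +
      if k - 1 ≤ i then z ^ i / (i ! : ℝ) else 0) =
      fun i => if k - 1 ≤ i then ((i + 1 : ℕ) : ℝ) * z ^ i / (i ! : ℝ) else 0 := by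
    funext i
    split_ifs
    · push_cast
      ring
    · simp
  have h := (hasSum_ite_natCast_mul_pow_div_factorial (k - 1) z).add
    (hasSum_truncExpSum (k - 1) z)
  rw [hsplit] at h
  simpa only [← sq] using h.ite_natCast_mul_pow_div_factorial (fun j => (j : ℝ))

lemma phiP_eq_div_truncExpSum (r : ℕ) {z : ℝ} (hz : 0 < z) :
    phiP r z = z * (truncExpSum (r - 1) z - truncExpSum r z) / truncExpSum r z := by
  rcases r with _ | n
  · simp [phiP]
  · have hf := (truncExpSum_pos (n + 1) hz).ne'
    rw [phiP, if_neg n.succ_ne_zero, poisTail, Nat.add_sub_cancel, truncExpSum_sub_succ]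
    field_simp

/-- `Var(Z) = E[Z](1 − φ_k(z) + φ_{k−1}(z))` for the Poisson truncated at `k`. -/
theorem stmt1 (k : ℕ) (z : ℝ) (hz : 0 < z) :
    truncVar k z = truncMean k z * (1 - phiP k z + phiP (k - 1) z) := by
  have hk := (truncExpSum_pos k hz).ne'
  have hk₁ := (truncExpSum_pos (k - 1) hz).ne'
  rw [truncVar, truncSecondMoment, truncMean,
    (hasSum_ite_natCast_sq_mul_pow_div_factorial k z).tsum_eq, phiP_eq_div_truncExpSum k hz,
    phiP_eq_div_truncExpSum (k - 1) hz]
  field_simp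
  ring
end

section
/- For k ≥ 1, φ_k(z) := z·P(Poi(z)=k−1)/P(Poi(z)≥k) is strictly decreasing in z on (0,∞), with φ_k(0+) = k and φ_k(∞) = 0. -/
open Real Filter Set

/-!
Factoring `z ^ k` out of the tail `Σ_{j ≥ k} z ^ j / j!` gives
`φ_k(z) = 1 / ((k - 1)! · g_k(z))` with `g_k(z) = Σ_j z ^ j / (j + k)!`.
The series `g_k` has positive coefficients, so it is continuous and strictly increasing on
`[0, ∞)`, tends to infinity, and `g_k(0) = 1 / k!`; hence `φ_k` decreases from
`(k - 1)! ⁻¹ · k! = k` to `0`.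
-/

noncomputable def shiftedExp (k : ℕ) (z : ℝ) : ℝ := ∑' j : ℕ, z ^ j / ((j + k).factorial : ℝ)

lemma summable_shiftedExp (k : ℕ) (z : ℝ) :
    Summable fun j : ℕ => z ^ j / ((j + k).factorial : ℝ) := by
  refine (Real.summable_pow_div_factorial |z|).of_norm_bounded fun j => ?_
  rw [norm_div, norm_pow, Real.norm_eq_abs, Real.norm_natCast]
  gcongr
  omega

lemma truncExpSum_eq_pow_mul_shiftedExp (k : ℕ) (z : ℝ) :
    truncExpSum k z = z ^ k * shiftedExp k z := by
  have hshift : truncExpSum k z = ∑' j : ℕ, z ^ (j + k) / ((j + k).factorial : ℝ) := by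
    refine ((add_left_injective k).tsum_eq fun x hx => ?_).symm.trans ?_
    · simp only [Function.mem_support, ne_eq, ite_eq_right_iff, not_forall] at hx
      exact ⟨x - k, Nat.sub_add_cancel hx.1⟩
    · exact tsum_congr fun j => if_pos (Nat.le_add_left k j)
  rw [hshift, shiftedExp, ← tsum_mul_left]
  exact tsum_congr fun j => by ring

lemma shiftedExp_zero (k : ℕ) : shiftedExp k 0 = (k.factorial : ℝ)⁻¹ := by
  rw [shiftedExp, tsum_eq_single 0 fun j hj => by simp [zero_pow hj]]
  simp

lemma shiftedExp_pos (k : ℕ) {z : ℝ} (hz : 0 ≤ z) : 0 < shiftedExp k z :=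
  (summable_shiftedExp k z).tsum_pos (fun j => by positivity) 0 (by simp; positivity)

lemma shiftedExp_strictMonoOn (k : ℕ) : StrictMonoOn (shiftedExp k) (Ici 0) := by
  intro a (ha : 0 ≤ a) b _ hab
  refine (summable_shiftedExp k a).tsum_lt_tsum (i := 1) (fun j => ?_) ?_
    (summable_shiftedExp k b)
  · gcongr
  · simp only [pow_one]
    gcongr

lemma continuous_shiftedExp (k : ℕ) : Continuous (shiftedExp k) := by
  refine continuous_iff_continuousAt.2 fun x => ?_
  have hball : ContinuousOn (shiftedExp k) (Metric.ball 0 (|x| + 1)) := by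
    refine continuousOn_tsum (fun j => by fun_prop) (summable_shiftedExp k (|x| + 1))
      fun j y hy => ?_
    rw [mem_ball_zero_iff, Real.norm_eq_abs] at hy
    rw [norm_div, norm_pow, Real.norm_eq_abs, Real.norm_natCast]
    gcongr
  exact hball.continuousAt (Metric.isOpen_ball.mem_nhds (by simp))

lemma tendsto_shiftedExp_atTop (k : ℕ) : Tendsto (shiftedExp k) atTop atTop := by
  refine tendsto_atTop_mono' atTop ?_ (tendsto_id.atTop_div_const
    (by positivity : (0 : ℝ) < (1 + k).factorial))
  filter_upwards [eventually_ge_atTop 0] with z hz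
  simpa [shiftedExp] using (summable_shiftedExp k z).le_tsum 1 fun j _ => by positivity

lemma phiP_eq_inv_shiftedExp {k : ℕ} (hk : 1 ≤ k) {z : ℝ} (hz : 0 < z) :
    phiP k z = ((k - 1).factorial * shiftedExp k z)⁻¹ := by
  have hzk : z ^ k = z * z ^ (k - 1) := by rw [← pow_succ']; congr 1; omega
  have := shiftedExp_pos k hz.le
  rw [phiP, if_neg (by omega), poisTail, truncExpSum_eq_pow_mul_shiftedExp, hzk]
  field_simp

/-- `φ_k` is strictly decreasing on `(0,∞)`, `φ_k(0+) = k`, `φ_k(∞) = 0`. -/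
theorem stmt5 (k : ℕ) (hk : 1 ≤ k) :
    StrictAntiOn (phiP k) (Set.Ioi 0) ∧
    Tendsto (phiP k) (nhdsWithin 0 (Set.Ioi 0)) (nhds (k : ℝ)) ∧
    Tendsto (phiP k) atTop (nhds 0) := by
  set c : ℝ := ((k - 1).factorial : ℝ) with hc_def
  have hc : 0 < c := by positivity
  have hphi : EqOn (phiP k) (fun z => (c * shiftedExp k z)⁻¹) (Ioi 0) :=
    fun z hz => phiP_eq_inv_shiftedExp hk hz
  have hlim0 : (c * shiftedExp k 0)⁻¹ = k := by
    rw [shiftedExp_zero, ← Nat.mul_factorial_pred (by omega : k ≠ 0), Nat.cast_mul, hc_def]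
    field_simp
  refine ⟨fun a ha b hb hab => ?_, ?_, ?_⟩
  · rw [hphi ha, hphi hb]
    have hmono := shiftedExp_strictMonoOn k (Ioi_subset_Ici_self ha) (Ioi_subset_Ici_self hb) hab
    exact inv_strictAnti₀ (mul_pos hc (shiftedExp_pos k ha.le)) (by gcongr)
  · refine Tendsto.congr' (eventuallyEq_nhdsWithin_of_eqOn hphi).symm ?_
    rw [← hlim0]
    exact ((((continuous_shiftedExp k).tendsto 0).const_mul c).inv₀
      (mul_pos hc (shiftedExp_pos k le_rfl)).ne').mono_left nhdsWithin_le_nhds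
  · refine Tendsto.congr' ?_ ((tendsto_shiftedExp_atTop k).const_mul_atTop hc).inv_tendsto_atTop
    filter_upwards [eventually_gt_atTop 0] with z hz
    exact (hphi hz).symm
end

section
/- For k ≥ 1 and z > 0, the derivative of z/p_k(z) equals (1 − φ_k(z))/p_k(z), where φ_k(z) = z·P(Poi(z)=k−1)/P(Poi(z)≥k). Consequently z/p_k(z) has a unique stationary point at the root z* of φ_k(z)=1, and z* is its unique absolute minimum point on (0,∞). -/
open Real Filter Set

/-! Since `∑_{j≥k} z^j/j! = z^k ∑_i z^i/(i+k)!`, the reciprocal `1/φ_{m+1}(z) = m! ∑_i z^i/(i+m+1)!`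
is a power series with positive coefficients: it increases strictly from `1/(m+1) < 1` at `z = 0`
to `∞`, so `φ_{m+1}` is strictly decreasing on `(0,∞)` and takes the value `1` exactly once.
As `p_{m+1}'(z) = P(Poi(z) = m)`, the derivative `(1 - φ_{m+1})/p_{m+1}` of `z/p_{m+1}(z)` is
negative before that root and positive after it. -/

open scoped Nat

noncomputable def shiftedExpSeries (k : ℕ) (z : ℝ) : ℝ :=
  ∑' i : ℕ, z ^ i / (i + k)!

theorem summable_pow_div_factorial_add (k : ℕ) (z : ℝ) :
    Summable fun i : ℕ => z ^ i / (i + k)! := by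
  refine (Real.summable_pow_div_factorial |z|).of_norm_bounded fun i => ?_
  rw [norm_div, norm_pow, Real.norm_eq_abs, RCLike.norm_natCast]
  gcongr
  exact Nat.le_add_right i k

theorem truncExpSum_eq_tsum_add (k : ℕ) (z : ℝ) :
    truncExpSum k z = ∑' i : ℕ, z ^ (i + k) / (i + k)! := by
  set f : ℕ → ℝ := fun j => if k ≤ j then z ^ j / j ! else 0
  have hshift : (fun i => f (i + k)) = fun i => z ^ (i + k) / (i + k)! := by
    funext i; simp [f]
  have hsum : Summable fun i => f (i + k) :=
    hshift ▸ (Real.summable_pow_div_factorial z).comp_injective (add_left_injective k)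
  rw [truncExpSum, ← hsum.comp_nat_add.sum_add_tsum_nat_add k, hshift,
    Finset.sum_eq_zero fun j hj => if_neg (by simpa using hj), zero_add]

theorem truncExpSum_eq_pow_mul (k : ℕ) (z : ℝ) :
    truncExpSum k z = z ^ k * shiftedExpSeries k z := by
  rw [truncExpSum_eq_tsum_add, shiftedExpSeries, ← tsum_mul_left]
  congr 1 with i
  ring

theorem truncExpSum_eq_exp_sub_sum (k : ℕ) (z : ℝ) :
    truncExpSum k z = exp z - ∑ j ∈ Finset.range k, z ^ j / j ! := by
  rw [truncExpSum_eq_tsum_add, Real.exp_eq_exp_ℝ, NormedSpace.exp_eq_tsum_div]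
  beta_reduce
  rw [← (Real.summable_pow_div_factorial z).sum_add_tsum_nat_add k]
  ring

theorem hasDerivAt_pow_succ_div_factorial (k : ℕ) (z : ℝ) :
    HasDerivAt (fun x : ℝ => x ^ (k + 1) / (k + 1)!) (z ^ k / k !) z := by
  refine ((hasDerivAt_pow (k + 1) z).div_const ((k + 1)! : ℝ)).congr_deriv ?_
  rw [Nat.factorial_succ]
  push_cast
  field_simp

theorem hasDerivAt_sum_range_pow_div_factorial (k : ℕ) (z : ℝ) :
    HasDerivAt (fun x : ℝ => ∑ j ∈ Finset.range (k + 1), x ^ j / j !)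
      (∑ j ∈ Finset.range k, z ^ j / j !) z := by
  induction k with
  | zero => simpa using hasDerivAt_const z (1 : ℝ)
  | succ k ih =>
    simp only [Finset.sum_range_succ _ (k + 1), Finset.sum_range_succ _ k] at ih ⊢
    exact ih.add (hasDerivAt_pow_succ_div_factorial k z)

theorem hasDerivAt_truncExpSum_succ (k : ℕ) (z : ℝ) :
    HasDerivAt (truncExpSum (k + 1)) (truncExpSum k z) z := by
  rw [truncExpSum_eq_exp_sub_sum k, funext (truncExpSum_eq_exp_sub_sum (k + 1))]
  exact (Real.hasDerivAt_exp z).sub (hasDerivAt_sum_range_pow_div_factorial k z)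

theorem hasDerivAt_poisTail_succ (k : ℕ) (z : ℝ) :
    HasDerivAt (poisTail (k + 1)) (exp (-z) * z ^ k / k !) z := by
  have h := (hasDerivAt_neg z).exp.mul (hasDerivAt_truncExpSum_succ k z)
  refine h.congr_deriv ?_
  rw [truncExpSum_eq_exp_sub_sum k, truncExpSum_eq_exp_sub_sum (k + 1), Finset.sum_range_succ]
  ring

theorem shiftedExpSeries_zero_right (k : ℕ) : shiftedExpSeries k 0 = (k ! : ℝ)⁻¹ := by
  rw [shiftedExpSeries, tsum_eq_single 0 fun i hi => by simp [hi]]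
  simp

theorem pow_div_factorial_le_shiftedExpSeries (k i : ℕ) {z : ℝ} (hz : 0 ≤ z) :
    z ^ i / (i + k)! ≤ shiftedExpSeries k z :=
  (summable_pow_div_factorial_add k z).le_tsum i fun j _ => by positivity

theorem shiftedExpSeries_pos (k : ℕ) {z : ℝ} (hz : 0 ≤ z) : 0 < shiftedExpSeries k z :=
  lt_of_lt_of_le (by positivity) (pow_div_factorial_le_shiftedExpSeries k 0 hz)

theorem strictMonoOn_shiftedExpSeries (k : ℕ) : StrictMonoOn (shiftedExpSeries k) (Ici 0) := by
  intro a ha b _ hab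
  refine (summable_pow_div_factorial_add k a).tsum_lt_tsum (i := 1) (fun i => ?_) ?_
    (summable_pow_div_factorial_add k b)
  · gcongr
  · simpa using div_lt_div_of_pos_right hab (by positivity)

theorem continuous_shiftedExpSeries (k : ℕ) : Continuous (shiftedExpSeries k) := by
  refine continuous_iff_continuousAt.2 fun x => ?_
  have hball : ContinuousOn (shiftedExpSeries k) (Metric.ball 0 (|x| + 1)) := by
    refine continuousOn_tsum (fun i => by fun_prop) (Real.summable_pow_div_factorial (|x| + 1))
      fun i y hy => ?_
    rw [norm_div, norm_pow, RCLike.norm_natCast]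
    rw [mem_ball_zero_iff] at hy
    gcongr
    exact Nat.le_add_right i k
  exact hball.continuousAt (Metric.isOpen_ball.mem_nhds (by simp))

theorem phiP_succ_eq_inv (m : ℕ) {z : ℝ} (hz : z ≠ 0) :
    phiP (m + 1) z = (m ! * shiftedExpSeries (m + 1) z)⁻¹ := by
  rw [phiP, if_neg m.succ_ne_zero, poisTail, truncExpSum_eq_pow_mul, Nat.add_sub_cancel]
  by_cases hS : shiftedExpSeries (m + 1) z = 0
  · simp [hS]
  · field_simp
    ring

theorem poisTail_pos (k : ℕ) {z : ℝ} (hz : 0 < z) : 0 < poisTail k z := by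
  rw [poisTail, truncExpSum_eq_pow_mul]
  have := shiftedExpSeries_pos k hz.le
  positivity

theorem hasDerivAt_div_poisTail_succ (m : ℕ) {z : ℝ} (hz : 0 < z) :
    HasDerivAt (fun x => x / poisTail (m + 1) x)
      ((1 - phiP (m + 1) z) / poisTail (m + 1) z) z := by
  have hp := (poisTail_pos (m + 1) hz).ne'
  refine ((hasDerivAt_id z).div (hasDerivAt_poisTail_succ m z) hp).congr_deriv ?_
  rw [phiP, if_neg m.succ_ne_zero, Nat.add_sub_cancel, id]
  field_simp

theorem strictAntiOn_phiP_succ (m : ℕ) : StrictAntiOn (phiP (m + 1)) (Ioi 0) := by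
  intro a (ha : 0 < a) b (hb : 0 < b) hab
  rw [phiP_succ_eq_inv m ha.ne', phiP_succ_eq_inv m hb.ne']
  have := shiftedExpSeries_pos (m + 1) ha.le
  gcongr
  exact strictMonoOn_shiftedExpSeries (m + 1) ha.le hb.le hab

theorem exists_phiP_succ_eq_one {m : ℕ} (hm : 1 ≤ m) :
    ∃ z, 0 < z ∧ phiP (m + 1) z = 1 := by
  set g : ℝ → ℝ := fun z => m ! * shiftedExpSeries (m + 1) z
  set M : ℝ := (m + 1) * (m + 2)
  have hg0 : g 0 < 1 := by
    have : (1 : ℝ) < m + 1 := by exact_mod_cast Nat.lt_succ_of_le hm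
    simp only [g, shiftedExpSeries_zero_right, Nat.factorial_succ]
    push_cast
    field_simp
    linarith
  have hM : 0 < M := by positivity
  have hgM : 1 ≤ g M := by
    have hfac : ((m + 2)! : ℝ) = M * m ! := by
      simp only [M, Nat.factorial_succ]; push_cast; ring
    have h := pow_div_factorial_le_shiftedExpSeries (m + 1) 1 (z := M) hM.le
    rw [pow_one, show 1 + (m + 1) = m + 2 by ring, hfac] at h
    calc (1 : ℝ) = m ! * (M / (M * m !)) := by field_simp
      _ ≤ g M := mul_le_mul_of_nonneg_left h (by positivity)
  obtain ⟨c, hc, hgc⟩ := intermediate_value_Icc hM.le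
    ((continuous_shiftedExpSeries (m + 1)).const_smul (m ! : ℝ)).continuousOn ⟨hg0.le, hgM⟩
  have hc0 : c ≠ 0 := by
    rintro rfl
    exact hg0.ne hgc
  refine ⟨c, lt_of_le_of_ne hc.1 (Ne.symm hc0), ?_⟩
  rw [phiP_succ_eq_inv m hc0]
  simpa using congrArg Inv.inv hgc

theorem apply_lt_apply_of_hasDerivAt_neg_of_pos {f f' : ℝ → ℝ} {a c z : ℝ}
    (hf : ∀ x, a < x → HasDerivAt f (f' x) x) (hneg : ∀ x, a < x → x < c → f' x < 0)
    (hpos : ∀ x, c < x → 0 < f' x) (hc : a < c) (hz : a < z) (hzc : z ≠ c) :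
    f c < f z := by
  have hcont : ∀ b, a < b → ∀ d, ContinuousOn f (Icc b d) := fun b hb d x hx =>
    (hf x (hb.trans_le hx.1)).continuousAt.continuousWithinAt
  rcases hzc.lt_or_gt with h | h
  · refine strictAntiOn_of_hasDerivWithinAt_neg (f' := f') (convex_Icc z c) (hcont z hz c)
      (fun x hx => ?_) (fun x hx => ?_) (left_mem_Icc.2 h.le) (right_mem_Icc.2 h.le) h
    all_goals rw [interior_Icc] at hx
    · exact (hf x (hz.trans hx.1)).hasDerivWithinAt
    · exact hneg x (hz.trans hx.1) hx.2
  · refine strictMonoOn_of_hasDerivWithinAt_pos (f' := f') (convex_Icc c z) (hcont c hc z)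
      (fun x hx => ?_) (fun x hx => ?_) (left_mem_Icc.2 h.le) (right_mem_Icc.2 h.le) h
    all_goals rw [interior_Icc] at hx
    · exact (hf x (hc.trans hx.1)).hasDerivWithinAt
    · exact hpos x hx.1

/-- `(z/p_k(z))' = (1 − φ_k(z))/p_k(z)`; for `k ≥ 2` the root `z*` of
`φ_k(z)=1` is unique and is the unique absolute minimum point of `z/p_k(z)` on `(0,∞)`. -/
theorem stmt6 (k : ℕ) (hk : 1 ≤ k) :
    (∀ z : ℝ, 0 < z →
      HasDerivAt (fun z : ℝ => z / poisTail k z) ((1 - phiP k z) / poisTail k z) z) ∧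
    (2 ≤ k → ∃! zstar : ℝ, 0 < zstar ∧ phiP k zstar = 1) ∧
    (2 ≤ k → ∀ zstar : ℝ, 0 < zstar → phiP k zstar = 1 →
      ∀ z : ℝ, 0 < z → z ≠ zstar →
        zstar / poisTail k zstar < z / poisTail k z) := by
  obtain ⟨m, rfl⟩ := Nat.exists_eq_add_of_le' hk
  have hanti := strictAntiOn_phiP_succ m
  refine ⟨fun z hz => hasDerivAt_div_poisTail_succ m hz, fun hk2 => ?_, ?_⟩
  · obtain ⟨c, hc, hphic⟩ := exists_phiP_succ_eq_one (by omega : 1 ≤ m)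
    exact ⟨c, ⟨hc, hphic⟩, fun y ⟨hy, hphiy⟩ => hanti.injOn hy hc (hphiy.trans hphic.symm)⟩
  · intro _ zstar hzs hphi z hz hne
    refine apply_lt_apply_of_hasDerivAt_neg_of_pos (fun x hx => hasDerivAt_div_poisTail_succ m hx)
      (fun x hx hxs => div_neg_of_neg_of_pos ?_ (poisTail_pos _ hx))
      (fun x hx => div_pos ?_ (poisTail_pos _ (hzs.trans hx))) hzs hz hne
    · linarith [hphi ▸ hanti hx hzs hxs]
    · linarith [hphi ▸ hanti hzs (hzs.trans hx) hx]
end
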